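/- arXiv:2512.06672 — 7 statements merged into one kernel-verified Lean document; each statement's English description precedes it below -/
import Mathlib

section
/- Let n ≥ 2 and ζ = exp(2πi/n). Then the sum over k = 1 to n-1 of 1/(1 - ζ^k)^2 equals -(n-1)(n-5)/12. -/
/-!
The numbers `ζ ^ k`, `1 ≤ k ≤ n - 1`, are the roots of `P = 1 + X + ⋯ + X ^ (n - 1)`. For any
polynomial `P = ∏ (X - aᵢ)` with `S = ∑ 1 / (x - aᵢ)` and `Q = ∑ 1 / (x - aᵢ) ^ 2` one has
`P'(x) = P(x) S` and `P''(x) = P(x) (S ^ 2 - Q)`. At `x = 1` the values `P(1) = n`,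
`P'(1) = n(n-1)/2` and `P''(1) = n(n-1)(n-2)/3` give `S = (n-1)/2` and then `Q`.
-/

open Complex Finset Polynomial
open scoped Nat

section PartialFractions

variable {K ι : Type*} [Field K] [DecidableEq ι] (s : Finset ι) (a : ι → K) {x : K}

theorem eval_prod_erase_X_sub_C (hx : ∀ i ∈ s, x ≠ a i) {i : ι} (hi : i ∈ s) :
    (∏ j ∈ s.erase i, (X - C (a j))).eval x =
      (∏ j ∈ s, (X - C (a j))).eval x * (1 / (x - a i)) := by
  rw [← mul_prod_erase s _ hi, eval_mul, eval_sub, eval_X, eval_C, mul_comm (x - a i),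
    mul_assoc, mul_one_div_cancel (sub_ne_zero.2 (hx i hi)), mul_one]

theorem eval_derivative_prod_X_sub_C (hx : ∀ i ∈ s, x ≠ a i) :
    (derivative (∏ i ∈ s, (X - C (a i)))).eval x =
      (∏ i ∈ s, (X - C (a i))).eval x * ∑ i ∈ s, 1 / (x - a i) := by
  simp only [derivative_prod_finset, derivative_X_sub_C, mul_one, eval_finsetSum, mul_sum]
  exact sum_congr rfl fun i hi ↦ eval_prod_erase_X_sub_C s a hx hi

theorem eval_derivative_derivative_prod_X_sub_C (hx : ∀ i ∈ s, x ≠ a i) :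
    (derivative (derivative (∏ i ∈ s, (X - C (a i))))).eval x =
      (∏ i ∈ s, (X - C (a i))).eval x *
        ((∑ i ∈ s, 1 / (x - a i)) ^ 2 - ∑ i ∈ s, 1 / (x - a i) ^ 2) := by
  set P := ∏ i ∈ s, (X - C (a i))
  set S := ∑ i ∈ s, 1 / (x - a i)
  simp only [P, derivative_prod_finset (s := s), derivative_X_sub_C, mul_one, derivative_sum,
    eval_finsetSum]
  calc ∑ i ∈ s, (derivative (∏ j ∈ s.erase i, (X - C (a j)))).eval x
      = ∑ i ∈ s, P.eval x * (1 / (x - a i) * (S - 1 / (x - a i))) := by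
        refine sum_congr rfl fun i hi ↦ ?_
        rw [eval_derivative_prod_X_sub_C _ _ fun j hj ↦ hx j (mem_of_mem_erase hj),
          eval_prod_erase_X_sub_C s a hx hi, sum_erase_eq_sub hi, mul_assoc]
    _ = P.eval x * (S ^ 2 - ∑ i ∈ s, 1 / (x - a i) ^ 2) := by
        simp only [← mul_sum, mul_sub, sum_sub_distrib, ← sum_mul, ← sq, one_div_pow]
        ring

end PartialFractions

theorem eval_one_iterate_derivative_geom_sum {R : Type*} [CommRing R] (k n : ℕ) :
    (derivative^[k] (∑ j ∈ range n, (X : R[X]) ^ j)).eval 1 = k ! * n.choose (k + 1) := by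
  induction n with
  | zero => simp
  | succ n ih =>
    rw [sum_range_succ, iterate_map_add, eval_add, ih, iterate_derivative_X_pow_eq_smul,
      eval_smul, eval_pow, eval_X, one_pow, smul_eq_mul, mul_one,
      Nat.descFactorial_eq_factorial_mul_choose, Nat.choose_succ_succ' n]
    push_cast
    ring

theorem IsPrimitiveRoot.prod_X_sub_C_pow_eq_geom_sum {R : Type*} [CommRing R] [IsDomain R]
    {ζ : R} {n : ℕ} (hζ : IsPrimitiveRoot ζ n) (hn : 0 < n) :
    ∏ k ∈ Icc 1 (n - 1), (X - C (ζ ^ k)) = ∑ j ∈ range n, (X : R[X]) ^ j := by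
  have hrange : range n = insert 0 (Icc 1 (n - 1)) := by
    ext; simp only [mem_range, mem_insert, mem_Icc]; omega
  apply (monic_X_sub_C (1 : R)).isRegular.left
  dsimp only
  rw [C_1, mul_geom_sum, ← C_1, X_pow_sub_C_eq_prod hζ hn (one_pow n), hrange,
    prod_insert (by simp)]
  simp

theorem sum_inv_sq_one_sub_root_of_unity (n : ℕ) (hn : 2 ≤ n)
    (ζ : ℂ) (hζ : ζ = Complex.exp (2 * Real.pi * Complex.I / n)) :
    ∑ k ∈ Finset.Icc 1 (n - 1), 1 / (1 - ζ ^ k) ^ 2 =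
      -(((n : ℂ) - 1) * ((n : ℂ) - 5)) / 12 := by
  have hprim : IsPrimitiveRoot ζ n := hζ ▸ isPrimitiveRoot_exp n (by omega)
  have hn0 : (n : ℂ) ≠ 0 := by norm_cast; omega
  have hroots : ∀ k ∈ Icc 1 (n - 1), (1 : ℂ) ≠ ζ ^ k := fun k hk ↦
    (hprim.pow_ne_one_of_pos_of_lt (by grind) (by grind)).symm
  have hP := hprim.prod_X_sub_C_pow_eq_geom_sum (by omega)
  have h0 := eval_one_iterate_derivative_geom_sum (R := ℂ) 0 n
  have h1 := eval_one_iterate_derivative_geom_sum (R := ℂ) 1 n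
  have h2 := eval_one_iterate_derivative_geom_sum (R := ℂ) 2 n
  simp only [Function.iterate_zero, Function.iterate_succ, Function.comp_apply, id] at h0 h1 h2
  have hS := eval_derivative_prod_X_sub_C _ (ζ ^ ·) hroots
  have hQ := eval_derivative_derivative_prod_X_sub_C _ (ζ ^ ·) hroots
  rw [hP, h0, h1] at hS
  rw [hP, h0, h2] at hQ
  set S := ∑ k ∈ Icc 1 (n - 1), 1 / (1 - ζ ^ k)
  set Q := ∑ k ∈ Icc 1 (n - 1), 1 / (1 - ζ ^ k) ^ 2
  simp only [Nat.cast_choose_eq_descPochhammer_div, descPochhammer_succ_right] at hS hQ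
  norm_num [Nat.factorial] at hS hQ
  have hS' : S = (n - 1) / 2 := mul_left_cancel₀ hn0 (by linear_combination -hS)
  exact mul_left_cancel₀ hn0 (by linear_combination hQ + n * (S + (n - 1) / 2) * hS')
end

section
/- Let n ≥ 2 and ζ = exp(2πi/n). Then the sum over k = 1 to n-1 of 1/(1 - ζ^k)^3 equals -(n-1)(n-3)/8. -/
/-!
The numbers `x_k = (1 - ζ^k)⁻¹`, `0 < k < n`, are permuted by `x ↦ 1 - x`, because
`ζ^(n-k) = ζ^(-k)`. This symmetry gives `∑ x_k = (n - 1)/2` and, after expanding `(1 - x)^3`,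
expresses `∑ x_k^3` through `∑ x_k` and `∑ x_k^2`. For `∑ x_k^2`, sum the identity
`∑_{j<n} j^2 w^j = (2n - n^2) x - 2n x^2` (for `w = ζ^k`, `x = (1 - w)⁻¹`) over `k`:
orthogonality turns the left side into `-∑_{j<n} j^2`.
-/

open Complex Finset

section CommRing

variable {R : Type*} [CommRing R]

theorem one_sub_mul_sum_range_natCast_mul_pow (w : R) (m : ℕ) :
    (1 - w) * ∑ j ∈ range m, (j : R) * w ^ j =
      ∑ j ∈ range m, w ^ j - 1 - ((m : R) - 1) * w ^ m := by
  induction m with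
  | zero => simp
  | succ m ih => rw [sum_range_succ, sum_range_succ, mul_add, ih]; push_cast; ring

theorem one_sub_mul_sum_range_natCast_sq_mul_pow (w : R) (m : ℕ) :
    (1 - w) * ∑ j ∈ range m, (j : R) ^ 2 * w ^ j =
      2 * ∑ j ∈ range m, (j : R) * w ^ j - ∑ j ∈ range m, w ^ j + 1 -
        ((m : R) - 1) ^ 2 * w ^ m := by
  induction m with
  | zero => simp
  | succ m ih =>
    simp only [sum_range_succ]
    push_cast
    linear_combination ih

theorem six_mul_sum_range_natCast_sq (m : ℕ) :
    6 * ∑ j ∈ range m, (j : R) ^ 2 = m * (m - 1) * (2 * m - 1) := by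
  induction m with
  | zero => simp
  | succ m ih => rw [sum_range_succ, mul_add, ih]; push_cast; ring

end CommRing

section Field

variable {K : Type*} [Field K]

theorem inv_one_sub_eq_one_sub_inv_one_sub {v w : K} (h : v * w = 1) (hw : w ≠ 1) :
    (1 - v)⁻¹ = 1 - (1 - w)⁻¹ := by
  have hw' : 1 - w ≠ 0 := sub_ne_zero.mpr hw.symm
  have hv : v = w⁻¹ := eq_inv_of_mul_eq_one_left h
  have hw0 : w ≠ 0 := right_ne_zero_of_mul_eq_one h
  subst hv
  field_simp
  ring

theorem sum_range_natCast_sq_mul_pow_of_pow_eq_one {w : K} {n : ℕ} (hwn : w ^ n = 1)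
    (hw : w ≠ 1) :
    ∑ j ∈ range n, (j : K) ^ 2 * w ^ j =
      (2 * n - n ^ 2) * (1 - w)⁻¹ - 2 * n * (1 - w)⁻¹ ^ 2 := by
  have hw' : 1 - w ≠ 0 := sub_ne_zero.mpr hw.symm
  have hgeom : ∑ j ∈ range n, w ^ j = 0 := by
    rw [geom_sum_eq hw, hwn, sub_self, zero_div]
  have h1 := one_sub_mul_sum_range_natCast_mul_pow w n
  have h2 := one_sub_mul_sum_range_natCast_sq_mul_pow w n
  rw [hgeom, hwn] at h1 h2
  field_simp
  linear_combination (1 - w) * h2 + 2 * h1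

end Field

namespace IsPrimitiveRoot

variable {K : Type*} [Field K] {ζ : K} {n : ℕ}

theorem sum_Ico_pow_pow_eq_neg_one (hζ : IsPrimitiveRoot ζ n) {j : ℕ} (hj0 : j ≠ 0)
    (hjn : j < n) : ∑ k ∈ Ico 1 n, (ζ ^ j) ^ k = -1 := by
  have hgeom : ∑ k ∈ range n, (ζ ^ j) ^ k = 0 := by
    rw [geom_sum_eq (hζ.pow_ne_one_of_pos_of_lt hj0 hjn), pow_right_comm, hζ.pow_eq_one, one_pow,
      sub_self, zero_div]
  rw [sum_range_eq_add_Ico _ (by omega), pow_zero] at hgeom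
  linear_combination hgeom

theorem sum_Ico_comp_inv_one_sub_pow (hζ : IsPrimitiveRoot ζ n) (f : K → K) :
    ∑ k ∈ Ico 1 n, f (1 - ζ ^ k)⁻¹ = ∑ k ∈ Ico 1 n, f (1 - (1 - ζ ^ k)⁻¹) := by
  have hreflect := sum_Ico_reflect (fun k ↦ f (1 - ζ ^ k)⁻¹) 1 (Nat.le_succ n)
  rw [Nat.add_sub_cancel_left, Nat.add_sub_cancel] at hreflect
  rw [← hreflect]
  refine sum_congr rfl fun k hk ↦ ?_
  obtain ⟨hk0, hkn⟩ := mem_Ico.mp hk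
  have hmul : ζ ^ (n - k) * ζ ^ k = 1 := by
    rw [← pow_add, Nat.sub_add_cancel hkn.le, hζ.pow_eq_one]
  rw [inv_one_sub_eq_one_sub_inv_one_sub hmul (hζ.pow_ne_one_of_pos_of_lt (by omega) hkn)]

theorem sum_Ico_inv_one_sub_pow [CharZero K] (hζ : IsPrimitiveRoot ζ n) (hn : n ≠ 0) :
    ∑ k ∈ Ico 1 n, (1 - ζ ^ k)⁻¹ = ((n : K) - 1) / 2 := by
  have hreflect := hζ.sum_Ico_comp_inv_one_sub_pow id
  simp only [id, sum_sub_distrib, sum_const, Nat.card_Ico, nsmul_one,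
    Nat.cast_pred (Nat.pos_of_ne_zero hn)] at hreflect
  linear_combination hreflect / 2

theorem sum_Ico_inv_one_sub_pow_sq [CharZero K] (hζ : IsPrimitiveRoot ζ n) (hn : n ≠ 0) :
    ∑ k ∈ Ico 1 n, (1 - ζ ^ k)⁻¹ ^ 2 = ((n : K) - 1) * (5 - n) / 12 := by
  have hmoment : ∀ k ∈ Ico 1 n, ∑ j ∈ range n, (j : K) ^ 2 * (ζ ^ k) ^ j =
      (2 * n - n ^ 2) * (1 - ζ ^ k)⁻¹ - 2 * n * (1 - ζ ^ k)⁻¹ ^ 2 := fun k hk ↦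
    sum_range_natCast_sq_mul_pow_of_pow_eq_one (by rw [pow_right_comm, hζ.pow_eq_one, one_pow])
      (hζ.pow_ne_one_of_pos_of_lt (by grind) (mem_Ico.mp hk).2)
  have horth : ∑ k ∈ Ico 1 n, ∑ j ∈ range n, (j : K) ^ 2 * (ζ ^ k) ^ j =
      -∑ j ∈ range n, (j : K) ^ 2 := by
    rw [sum_comm, ← sum_neg_distrib]
    refine sum_congr rfl fun j hj ↦ ?_
    rcases eq_or_ne j 0 with rfl | hj0
    · simp
    simp_rw [← pow_mul, mul_comm _ j, pow_mul, ← mul_sum,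
      hζ.sum_Ico_pow_pow_eq_neg_one hj0 (mem_range.mp hj), mul_neg_one]
  rw [sum_congr rfl hmoment, sum_sub_distrib, ← mul_sum, ← mul_sum,
    hζ.sum_Ico_inv_one_sub_pow hn] at horth
  have hsq := six_mul_sum_range_natCast_sq (R := K) n
  apply mul_left_cancel₀ (mul_ne_zero (by norm_num : (12 : K) ≠ 0) (Nat.cast_ne_zero.mpr hn))
  linear_combination (-6) * horth + hsq

theorem sum_Ico_inv_one_sub_pow_cube [CharZero K] (hζ : IsPrimitiveRoot ζ n) (hn : n ≠ 0) :
    ∑ k ∈ Ico 1 n, (1 - ζ ^ k)⁻¹ ^ 3 = -(((n : K) - 1) * (n - 3)) / 8 := by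
  have hreflect := hζ.sum_Ico_comp_inv_one_sub_pow (· ^ 3)
  have hexpand : ∀ x : K, (1 - x) ^ 3 = 1 - 3 * x + 3 * x ^ 2 - x ^ 3 := fun x ↦ by ring
  simp only [hexpand, sum_sub_distrib, sum_add_distrib, ← mul_sum, sum_const, Nat.card_Ico,
    nsmul_one, Nat.cast_pred (Nat.pos_of_ne_zero hn), hζ.sum_Ico_inv_one_sub_pow hn,
    hζ.sum_Ico_inv_one_sub_pow_sq hn] at hreflect
  linear_combination hreflect / 2

end IsPrimitiveRoot

theorem sum_inv_cube_one_sub_root_of_unity (n : ℕ) (hn : 2 ≤ n)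
    (ζ : ℂ) (hζ : ζ = Complex.exp (2 * Real.pi * Complex.I / n)) :
    ∑ k ∈ Finset.Icc 1 (n - 1), 1 / (1 - ζ ^ k) ^ 3 =
      -(((n : ℂ) - 1) * ((n : ℂ) - 3)) / 8 := by
  have hn0 : n ≠ 0 := by omega
  have hprim : IsPrimitiveRoot ζ n := hζ ▸ Complex.isPrimitiveRoot_exp n hn0
  rw [Finset.Icc_sub_one_right_eq_Ico_of_not_isMin (by simpa using hn0)]
  simp only [one_div, ← inv_pow]
  exact hprim.sum_Ico_inv_one_sub_pow_cube hn0
end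

section
/- Let n ≥ 2 and ζ = exp(2πi/n). Then the sum over k = 1 to n-1 of 1/(1 - ζ^k)^5 equals (n-1)(n-5)(n² + 6n - 19)/288. -/
/-! For an `n`-th root of unity `x ≠ 1` put `y = (1 - x)⁻¹`, so that `x y = y - 1`. Then
`∑_{j<n} C(j, m) x^j = -∑_{i<m} C(n, m - i) y (y - 1)^i`. Summing over the nontrivial `n`-th roots
of unity, orthogonality and the hockey-stick identity turn the left side into `-C(n, m + 1)`.
This is a triangular linear system for `T i = ∑_k y_k (y_k - 1)^i`, and the sum in question is
`∑_{i ≤ 4} C(4, i) T i` because `y^5 = y ((y - 1) + 1)^4`. -/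

open Complex Finset

theorem Nat.sum_range_choose_eq_choose_succ (n m : ℕ) :
    ∑ j ∈ range n, j.choose m = n.choose (m + 1) := by
  induction n with
  | zero => simp
  | succ n ih => rw [sum_range_succ, ih, Nat.choose_succ_succ', add_comm]

section CommRing

variable {R : Type*} [CommRing R]

theorem one_sub_mul_sum_range_choose_succ_mul_pow (x : R) (n m : ℕ) :
    (1 - x) * ∑ j ∈ range n, (j.choose (m + 1) : R) * x ^ j =
      x * ∑ j ∈ range n, (j.choose m : R) * x ^ j - n.choose (m + 1) * x ^ n := by
  induction n with
  | zero => simp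
  | succ n ih =>
    simp only [sum_range_succ, mul_add, ih, Nat.choose_succ_succ', Nat.cast_add]
    ring

theorem sum_range_choose_mul_pow_of_pow_eq_one {x y : R} {n : ℕ} (hx : x ^ n = 1)
    (hy : (1 - x) * y = 1) (m : ℕ) :
    ∑ j ∈ range n, (j.choose m : R) * x ^ j =
      -∑ i ∈ range m, (n.choose (m - i) : R) * (y * (y - 1) ^ i) := by
  induction m with
  | zero =>
    have hgeom := mul_neg_geom_sum x n
    rw [hx, sub_self] at hgeom
    simp only [Nat.choose_zero_right, Nat.cast_one, one_mul, range_zero, sum_empty, neg_zero]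
    linear_combination y * hgeom - (∑ i ∈ range n, x ^ i) * hy
  | succ m ih =>
    have hrec := one_sub_mul_sum_range_choose_succ_mul_pow x n m
    rw [hx, ih] at hrec
    rw [sum_range_succ', Nat.sub_zero]
    have hS : ∑ i ∈ range m, (n.choose (m - i) : R) * (y * (y - 1) ^ (i + 1)) =
        (y - 1) * ∑ i ∈ range m, (n.choose (m - i) : R) * (y * (y - 1) ^ i) := by
      rw [mul_sum]; exact sum_congr rfl fun i _ ↦ by ring
    simp only [Nat.add_sub_add_right, hS]
    -- multiply `hrec` by `y` and use `x * y = y - 1`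
    linear_combination y * hrec - (∑ j ∈ range n, (j.choose (m + 1) : R) * x ^ j -
      ∑ i ∈ range m, (n.choose (m - i) : R) * (y * (y - 1) ^ i)) * hy

end CommRing

section Domain

variable {R : Type*} [CommRing R] [IsDomain R] {ζ : R} {n : ℕ}

theorem IsPrimitiveRoot.sum_Icc_pow_pow_eq_neg_one (h : IsPrimitiveRoot ζ n) {j : ℕ}
    (hj0 : j ≠ 0) (hjn : j < n) : ∑ k ∈ Icc 1 (n - 1), (ζ ^ k) ^ j = -1 := by
  have hgeom : ∑ k ∈ range n, (ζ ^ j) ^ k = 0 := by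
    have hmul := mul_neg_geom_sum (ζ ^ j) n
    rw [← pow_mul, mul_comm j n, pow_mul, h.pow_eq_one, one_pow, sub_self] at hmul
    exact (mul_eq_zero.mp hmul).resolve_left
      (sub_ne_zero.mpr (h.pow_ne_one_of_pos_of_lt hj0 hjn).symm)
  obtain ⟨n, rfl⟩ : ∃ n', n = n' + 1 := ⟨n - 1, by omega⟩
  rw [sum_range_succ', pow_zero] at hgeom
  rw [Nat.add_sub_cancel, ← Ico_add_one_right_eq_Icc, sum_Ico_eq_sum_range, Nat.add_sub_cancel]
  simp only [add_comm 1, ← pow_mul, mul_comm _ j] at hgeom ⊢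
  linear_combination hgeom

theorem IsPrimitiveRoot.sum_Icc_sum_range_choose_mul_pow (h : IsPrimitiveRoot ζ n) {m : ℕ}
    (hm : m ≠ 0) :
    ∑ k ∈ Icc 1 (n - 1), ∑ j ∈ range n, (j.choose m : R) * (ζ ^ k) ^ j = -n.choose (m + 1) := by
  have hterm : ∀ j ∈ range n, ∑ k ∈ Icc 1 (n - 1), (j.choose m : R) * (ζ ^ k) ^ j =
      -j.choose m := by
    intro j hj
    rcases eq_or_ne j 0 with rfl | hj0
    · simp [Nat.choose_eq_zero_of_lt (Nat.pos_of_ne_zero hm)]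
    · rw [← mul_sum, h.sum_Icc_pow_pow_eq_neg_one hj0 (mem_range.mp hj), mul_neg_one]
  rw [sum_comm, sum_congr rfl hterm, sum_neg_distrib, ← Nat.cast_sum,
    Nat.sum_range_choose_eq_choose_succ]

end Domain

theorem IsPrimitiveRoot.sum_range_choose_mul_sum_Icc_inv_one_sub_pow {K : Type*} [Field K]
    {ζ : K} {n m : ℕ} (h : IsPrimitiveRoot ζ n) (hm : m ≠ 0) :
    ∑ i ∈ range m, (n.choose (m - i) : K) *
        ∑ k ∈ Icc 1 (n - 1), (1 - ζ ^ k)⁻¹ * ((1 - ζ ^ k)⁻¹ - 1) ^ i =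
      n.choose (m + 1) := by
  have hG : ∀ k ∈ Icc 1 (n - 1), ∑ j ∈ range n, (j.choose m : K) * (ζ ^ k) ^ j =
      -∑ i ∈ range m, (n.choose (m - i) : K) * ((1 - ζ ^ k)⁻¹ * ((1 - ζ ^ k)⁻¹ - 1) ^ i) := by
    intro k hk
    obtain ⟨hk1, hkn⟩ := mem_Icc.mp hk
    have hζk : ζ ^ k ≠ 1 := h.pow_ne_one_of_pos_of_lt (by omega) (by omega)
    refine sum_range_choose_mul_pow_of_pow_eq_one ?_
      (mul_inv_cancel₀ (sub_ne_zero.mpr hζk.symm)) m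
    rw [← pow_mul, mul_comm, pow_mul, h.pow_eq_one, one_pow]
  have horth := h.sum_Icc_sum_range_choose_mul_pow (R := K) hm
  rw [sum_congr rfl hG, sum_neg_distrib, neg_inj, sum_comm] at horth
  simpa only [mul_sum] using horth

theorem sum_range_choose_four_mul_eq_of_forall_sum_range_choose_mul_eq {K : Type*} [Field K]
    [CharZero K] {n : ℕ} (hn : n ≠ 0) {T : ℕ → K}
    (hT : ∀ m ≠ 0, ∑ i ∈ range m, (n.choose (m - i) : K) * T i = n.choose (m + 1)) :
    ∑ i ∈ range 5, (Nat.choose 4 i : K) * T i =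
      ((n : K) - 1) * ((n : K) - 5) * ((n : K) ^ 2 + 6 * n - 19) / 288 := by
  have hn0 : (n : K) ≠ 0 := Nat.cast_ne_zero.mpr hn
  obtain ⟨E1, E2, E3, E4, E5⟩ : _ ∧ _ ∧ _ ∧ _ ∧ _ := ⟨hT 1 one_ne_zero, hT 2 two_ne_zero,
    hT 3 three_ne_zero, hT 4 four_ne_zero, hT 5 (by norm_num)⟩
  norm_num [sum_range_succ, Nat.cast_choose_eq_descPochhammer_div, descPochhammer_succ_eval,
    Nat.factorial] at E1 E2 E3 E4 E5 ⊢
  have hT0 : T 0 = (n - 1) / 2 := mul_left_cancel₀ hn0 (by linear_combination E1)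
  have hT1 : T 1 = -(n - 1) * (n + 1) / 12 :=
    mul_left_cancel₀ hn0 (by linear_combination E2 - n * (n - 1) / 2 * hT0)
  have hT2 : T 2 = (n - 1) * (n + 1) / 24 :=
    mul_left_cancel₀ hn0 (by
      linear_combination E3 - n * (n - 1) * (n - 2) / 6 * hT0 - n * (n - 1) / 2 * hT1)
  have hT3 : T 3 = ((n : K) ^ 2 - 1) * (n ^ 2 - 19) / 720 :=
    mul_left_cancel₀ hn0 (by
      linear_combination E4 - n * (n - 1) * (n - 2) * (n - 3) / 24 * hT0
        - n * (n - 1) * (n - 2) / 6 * hT1 - n * (n - 1) / 2 * hT2)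
  refine mul_left_cancel₀ hn0 ?_
  linear_combination E5 + (4 * n - n * (n - 1) / 2) * hT3
    + (6 * n - n * (n - 1) * (n - 2) / 6) * hT2
    + (4 * n - n * (n - 1) * (n - 2) * (n - 3) / 24) * hT1
    + (n - n * (n - 1) * (n - 2) * (n - 3) * (n - 4) / 120) * hT0

theorem sum_inv_pow5_one_sub_root_of_unity (n : ℕ) (hn : 2 ≤ n)
    (ζ : ℂ) (hζ : ζ = Complex.exp (2 * Real.pi * Complex.I / n)) :
    ∑ k ∈ Finset.Icc 1 (n - 1), 1 / (1 - ζ ^ k) ^ 5 =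
      ((n : ℂ) - 1) * ((n : ℂ) - 5) * ((n : ℂ) ^ 2 + 6 * n - 19) / 288 := by
  have hprim : IsPrimitiveRoot ζ n := hζ ▸ Complex.isPrimitiveRoot_exp n (by omega)
  rw [← sum_range_choose_four_mul_eq_of_forall_sum_range_choose_mul_eq (by omega)
    fun m hm ↦ hprim.sum_range_choose_mul_sum_Icc_inv_one_sub_pow hm]
  simp only [mul_sum]
  rw [sum_comm]
  refine sum_congr rfl fun k _ ↦ ?_
  norm_num [sum_range_succ, Nat.choose]
  rw [← inv_pow]
  ring
end

section
/- Let n ≥ 2, ζ = exp(2πi/n), and let m ≥ 1 with m ≤ n-1. Then the m-th elementary symmetric polynomial of the values 1/(1-ζ^k) for k = 1,…,n-1, i.e. the sum over 1 ≤ i₁ < i₂ < … < i_m ≤ n-1 of ∏_{r=1}^m 1/(1-ζ^{i_r}), equals (1/(m+1))·C(n-1, m). -/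
/-!
Put `a_k = 1 / (1 - ζ ^ k)`. Substituting `x = X + 1`, `y = X` in
`x ^ n - y ^ n = ∏_{k < n} (x - ζ ^ k y)` and pulling out the factors `1 - ζ ^ k`, whose product
is `n`, gives `(X + 1) ^ n - X ^ n = n ∏_{k=1}^{n-1} (X + a_k)`. Comparing coefficients of
`X ^ (n-1-m)` yields `n e_m(a) = C(n, m+1) = n C(n-1, m) / (m+1)`.
-/

open Finset Polynomial

theorem Finset.prod_Icc_one_eq_prod_range {M : Type*} [CommMonoid M] (f : ℕ → M) (n : ℕ) :
    ∏ k ∈ Icc 1 n, f k = ∏ k ∈ range n, f (k + 1) := by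
  rw [range_eq_Ico, prod_Ico_add' f 0 n 1, zero_add, Ico_add_one_right_eq_Icc]

namespace IsPrimitiveRoot

theorem pow_sub_pow_eq_prod_range {R : Type*} [CommRing R] [IsDomain R] {ζ : R} {n : ℕ}
    (hζ : IsPrimitiveRoot ζ n) (hn : 0 < n) (x y : R) :
    x ^ n - y ^ n = ∏ i ∈ range n, (x - ζ ^ i * y) := by
  simpa [eval_prod] using congrArg (eval x) (X_pow_sub_C_eq_prod hζ hn (rfl : y ^ n = _))

variable {K : Type*} [Field K] {ζ : K} {n : ℕ}

theorem add_one_pow_sub_pow_eq_prod (hζ : IsPrimitiveRoot ζ (n + 1)) :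
    (X + 1 : K[X]) ^ (n + 1) - X ^ (n + 1) =
      C ((n : K) + 1) * ∏ k ∈ Icc 1 n, (X + C (1 - ζ ^ k)⁻¹) := by
  have factor : ∀ k ∈ Icc 1 n,
      X + 1 - C ζ ^ k * X = C (1 - ζ ^ k) * (X + C (1 - ζ ^ k)⁻¹) := by
    intro k hk
    have hk1 : 1 - ζ ^ k ≠ 0 :=
      sub_ne_zero.mpr (hζ.pow_ne_one_of_pos_of_lt (by grind) (by grind)).symm
    rw [mul_add, ← C_mul, mul_inv_cancel₀ hk1]
    simp only [map_sub, map_one, map_pow]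
    ring
  rw [(hζ.map_of_injective C_injective).pow_sub_pow_eq_prod_range n.succ_pos, prod_range_succ',
    ← hζ.prod_one_sub_pow_eq_order, ← prod_Icc_one_eq_prod_range (fun k ↦ 1 - ζ ^ k), map_prod,
    ← prod_mul_distrib, ← prod_congr rfl factor, prod_Icc_one_eq_prod_range, pow_zero, one_mul,
    add_sub_cancel_left, mul_one]

theorem mul_esymm_inv_one_sub_pow (hζ : IsPrimitiveRoot ζ (n + 1)) {m : ℕ} (hm : m ≤ n) :
    ((n : K) + 1) * ∑ s ∈ (Icc 1 n).powersetCard m, ∏ k ∈ s, (1 - ζ ^ k)⁻¹ =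
      (n + 1).choose (m + 1) := by
  have h := congrArg (coeff · (n - m)) hζ.add_one_pow_sub_pow_eq_prod
  simp only [coeff_C_mul] at h
  rw [prod_X_add_C_coeff _ _ (by simp), Nat.card_Icc, Nat.add_sub_cancel, Nat.sub_sub_self hm,
    coeff_sub, coeff_X_add_one_pow, coeff_X_pow, if_neg (by omega), sub_zero,
    Nat.choose_symm_of_eq_add (show n + 1 = (n - m) + (m + 1) by omega)] at h
  exact h.symm

theorem add_one_mul_esymm_inv_one_sub_pow (hζ : IsPrimitiveRoot ζ (n + 1)) {m : ℕ}
    (hm : m ≤ n) :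
    ((m : K) + 1) * ∑ s ∈ (Icc 1 n).powersetCard m, ∏ k ∈ s, (1 - ζ ^ k)⁻¹ = n.choose m := by
  have hn : (n : K) + 1 ≠ 0 := by exact_mod_cast hζ.neZero'.out
  apply mul_left_cancel₀ hn
  rw [mul_left_comm, hζ.mul_esymm_inv_one_sub_pow hm]
  have key : (m + 1) * (n + 1).choose (m + 1) = (n + 1) * n.choose m := by
    rw [Nat.add_one_mul_choose_eq, mul_comm]
  exact_mod_cast congrArg (Nat.cast : ℕ → K) key

end IsPrimitiveRoot

theorem esymm_inv_one_sub_root_of_unity_general (n m : ℕ) (hn : 2 ≤ n)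
    (hmn : m ≤ n - 1)
    (ζ : ℂ) (hζ : ζ = Complex.exp (2 * Real.pi * Complex.I / n)) :
    ∑ s ∈ (Finset.Icc 1 (n - 1)).powersetCard m, ∏ k ∈ s, (1 / (1 - ζ ^ k)) =
      (1 / ((m : ℂ) + 1)) * (Nat.choose (n - 1) m : ℂ) := by
  obtain ⟨n, rfl⟩ : ∃ k, n = k + 1 := ⟨n - 1, by omega⟩
  have hprim : IsPrimitiveRoot ζ (n + 1) := hζ ▸ Complex.isPrimitiveRoot_exp _ n.succ_ne_zero
  simp only [Nat.add_sub_cancel, one_div] at hmn ⊢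
  rw [← hprim.add_one_mul_esymm_inv_one_sub_pow hmn,
    inv_mul_cancel_left₀ (Nat.cast_add_one_ne_zero m)]

theorem esymm_inv_one_sub_root_of_unity (n m : ℕ) (hn : 2 ≤ n)
    (hm : 1 ≤ m) (hmn : m ≤ n - 1)
    (ζ : ℂ) (hζ : ζ = Complex.exp (2 * Real.pi * Complex.I / n)) :
    ∑ s ∈ (Finset.Icc 1 (n - 1)).powersetCard m, ∏ k ∈ s, (1 / (1 - ζ ^ k)) =
      (1 / ((m : ℂ) + 1)) * (Nat.choose (n - 1) m : ℂ) :=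
  esymm_inv_one_sub_root_of_unity_general n m hn hmn ζ hζ
end

section
/- Let n ≥ 2, ζ = exp(2πi/n), and s₁,…,s_m positive integers. Then the imaginary part of 𝔷_n(ζ;s₁,…,s_m) + 𝔷_n(ζ;s_m,…,s₁) is zero, where 𝔷_n(ζ;s₁,…,s_m) = Σ_{1≤i₁<…<i_m≤n-1} ∏_{r=1}^m (1-ζ^{i_r})^{-s_r}. -/
/-! Complex conjugation sends `1 - ζ ^ k` to `1 - ζ ^ (n - k)`, so it maps the sum for `s` to
the sum for the reversed exponents once the index tuple `i` is replaced by its reflection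
`r ↦ n - i (rev r)`, an involution of the strictly increasing tuples in `{1, …, n - 1}`.
Hence the two sums are complex conjugates and their sum is real. -/

open Complex Finset
open scoped Classical ComplexConjugate

def increasingTuples (n m : ℕ) : Finset (Fin m → ℕ) :=
  (Fintype.piFinset fun _ : Fin m => Icc 1 (n - 1)).filter StrictMono

def reflectTuple (n : ℕ) {m : ℕ} (i : Fin m → ℕ) : Fin m → ℕ :=
  fun r => n - i r.rev

section Reflection

variable {n m : ℕ} {i : Fin m → ℕ}

theorem mem_increasingTuples :
    i ∈ increasingTuples n m ↔ (∀ r, 1 ≤ i r ∧ i r ≤ n - 1) ∧ StrictMono i := by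
  simp only [increasingTuples, mem_filter, Fintype.mem_piFinset, mem_Icc]

theorem reflectTuple_mem_increasingTuples (hi : i ∈ increasingTuples n m) :
    reflectTuple n i ∈ increasingTuples n m := by
  obtain ⟨hbounds, hmono⟩ := mem_increasingTuples.mp hi
  refine mem_increasingTuples.mpr ⟨fun r => ?_, fun x y hxy => ?_⟩
  · have := hbounds r.rev
    simp only [reflectTuple]
    omega
  · have hlt : i y.rev < i x.rev := hmono (Fin.rev_lt_rev.mpr hxy)
    have := hbounds x.rev
    simp only [reflectTuple]
    omega

theorem reflectTuple_reflectTuple (hi : i ∈ increasingTuples n m) :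
    reflectTuple n (reflectTuple n i) = i := by
  funext r
  have := (mem_increasingTuples.mp hi).1 r
  simp only [reflectTuple, Fin.rev_rev]
  omega

theorem sum_increasingTuples_comp_reflectTuple {β : Type*} [AddCommMonoid β]
    (g : (Fin m → ℕ) → β) :
    ∑ i ∈ increasingTuples n m, g (reflectTuple n i) = ∑ i ∈ increasingTuples n m, g i :=
  sum_nbij' (reflectTuple n) (reflectTuple n)
    (fun _ => reflectTuple_mem_increasingTuples) (fun _ => reflectTuple_mem_increasingTuples)
    (fun _ => reflectTuple_reflectTuple) (fun _ => reflectTuple_reflectTuple)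
    fun _ _ => rfl

end Reflection

theorem exp_two_pi_mul_I_div_pow_self (n : ℕ) : exp (2 * Real.pi * I / n) ^ n = 1 := by
  rcases eq_or_ne n 0 with rfl | hn
  · rw [pow_zero]
  · exact (isPrimitiveRoot_exp n hn).pow_eq_one

theorem norm_exp_two_pi_mul_I_div (n : ℕ) : ‖exp (2 * Real.pi * I / n)‖ = 1 := by
  have : 2 * Real.pi * I / n = ((2 * Real.pi / n : ℝ) : ℂ) * I := by
    push_cast
    ring
  rw [this, norm_exp_ofReal_mul_I]

theorem conj_pow_eq_pow_sub {ζ : ℂ} {n k : ℕ} (hζn : ζ ^ n = 1) (hζ : ‖ζ‖ = 1) (hk : k ≤ n) :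
    conj (ζ ^ k) = ζ ^ (n - k) := by
  rw [map_pow, ← inv_eq_conj hζ, inv_pow]
  refine inv_eq_of_mul_eq_one_left ?_
  rw [← pow_add, Nat.sub_add_cancel hk, hζn]

theorem conj_sum_prod_inv_one_sub_pow {ζ : ℂ} {n m : ℕ} (hζn : ζ ^ n = 1) (hζ : ‖ζ‖ = 1)
    (s : Fin m → ℕ) :
    conj (∑ i ∈ increasingTuples n m, ∏ r, ((1 - ζ ^ i r) ^ s r)⁻¹) =
      ∑ i ∈ increasingTuples n m, ∏ r, ((1 - ζ ^ i r) ^ s r.rev)⁻¹ := by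
  rw [map_sum, ← sum_increasingTuples_comp_reflectTuple]
  refine sum_congr rfl fun i hi => ?_
  rw [map_prod]
  refine Fintype.prod_equiv Fin.revPerm _ _ fun r => ?_
  have hir := (mem_increasingTuples.mp hi).1 r.rev
  simp only [Fin.revPerm_apply, reflectTuple, Fin.rev_rev]
  rw [map_inv₀, map_pow, map_sub, map_one, conj_pow_eq_pow_sub hζn hζ (by omega),
    Nat.sub_sub_self (by omega)]

theorem im_qmzv_add_rev_eq_zero_general (n m : ℕ)
    (ζ : ℂ) (hζ : ζ = Complex.exp (2 * Real.pi * Complex.I / n))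
    (s : Fin m → ℕ) :
    ((∑ i ∈ (Fintype.piFinset fun _ : Fin m => Finset.Icc 1 (n - 1)).filter
          (fun i => StrictMono i),
        ∏ r, ((1 - ζ ^ (i r)) ^ (s r))⁻¹) +
      ∑ i ∈ (Fintype.piFinset fun _ : Fin m => Finset.Icc 1 (n - 1)).filter
          (fun i => StrictMono i),
        ∏ r, ((1 - ζ ^ (i r)) ^ (s r.rev))⁻¹).im = 0 := by
  subst hζ
  change ((∑ i ∈ increasingTuples n m, _ : ℂ) + ∑ i ∈ increasingTuples n m, _).im = 0
  rw [← conj_sum_prod_inv_one_sub_pow (exp_two_pi_mul_I_div_pow_self n)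
    (norm_exp_two_pi_mul_I_div n) s, add_conj, ofReal_im]

theorem im_qmzv_add_rev_eq_zero (n m : ℕ) (hn : 2 ≤ n)
    (ζ : ℂ) (hζ : ζ = Complex.exp (2 * Real.pi * Complex.I / n))
    (s : Fin m → ℕ) (hs : ∀ r, 1 ≤ s r) :
    ((∑ i ∈ (Fintype.piFinset fun _ : Fin m => Finset.Icc 1 (n - 1)).filter
          (fun i => StrictMono i),
        ∏ r, ((1 - ζ ^ (i r)) ^ (s r))⁻¹) +
      ∑ i ∈ (Fintype.piFinset fun _ : Fin m => Finset.Icc 1 (n - 1)).filter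
          (fun i => StrictMono i),
        ∏ r, ((1 - ζ ^ (i r)) ^ (s r.rev))⁻¹).im = 0 :=
  im_qmzv_add_rev_eq_zero_general n m ζ hζ s
end

section
/- Let n ≥ 3, ζ = exp(2πi/n), u_k = 1/(1-ζ^k). Then the real part of Σ_{1≤i₁<…<i_{n-2}≤n-1} u_{i₁}⋯u_{i_{n-3}}·u_{i_{n-2}}² equals (n-1)/(2n). -/
open Complex Finset
open scoped Classical

/-!
A strictly increasing `(n-2)`-tuple in `{1, …, n-1}` omits exactly one index `j`, so the sum is
`∑ⱼ (∏_{k ≠ j} u_k) · u_m`, where the largest entry `m` is `n-1` unless `j = n-1`. Since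
`∏_{k=1}^{n-1} (1 - ζ^k) = n`, the coefficient `∏_{k ≠ j} u_k` equals `(1 - ζ^j)/n`, and these
coefficients add up to `1` because `∑ ζ^k = 0`. With `w = ζ^(n-1) = ζ⁻¹` the sum collapses to
`1/(1-w) + (1/(1+w) - 1)/n`, and both `1/(1-w)` and `1/(1+w)` have real part `1/2` because
`w` and `-w` lie on the unit circle.
-/

namespace Finset

variable {α β : Type*} [AddCommMonoid β]

theorem sum_filter_strictMono_image_univ [LinearOrder α] (s : Finset α) (k : ℕ)
    (G : Finset α → β) :
    ∑ i ∈ (Fintype.piFinset fun _ : Fin k => s).filter StrictMono, G (univ.image i) =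
      ∑ t ∈ s.powersetCard k, G t := by
  refine sum_bij (fun i _ => univ.image i) (fun i hi => ?_) (fun i hi j hj hij => ?_)
    (fun t ht => ?_) (fun _ _ => rfl)
  · obtain ⟨hs, hmono⟩ := mem_filter.1 hi
    refine mem_powersetCard.2 ⟨fun x hx => ?_, ?_⟩
    · obtain ⟨r, -, rfl⟩ := mem_image.1 hx
      exact Fintype.mem_piFinset.1 hs r
    · rw [card_image_of_injective _ hmono.injective, card_univ, Fintype.card_fin]
  · have hcard : (univ.image i).card = k := by
      rw [card_image_of_injective _ (mem_filter.1 hi).2.injective, card_univ, Fintype.card_fin]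
    exact (orderEmbOfFin_unique hcard (fun r => mem_image_of_mem i (mem_univ r))
      (mem_filter.1 hi).2).trans (orderEmbOfFin_unique hcard
        (fun r => hij ▸ mem_image_of_mem j (mem_univ r)) (mem_filter.1 hj).2).symm
  · obtain ⟨hts, htk⟩ := mem_powersetCard.1 ht
    refine ⟨t.orderEmbOfFin htk, mem_filter.2 ⟨Fintype.mem_piFinset.2 fun r => hts ?_,
      (t.orderEmbOfFin htk).strictMono⟩, image_orderEmbOfFin_univ t htk⟩
    exact orderEmbOfFin_mem t htk r

theorem sum_powersetCard_eq_sum_erase [DecidableEq α] (s : Finset α) {k : ℕ}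
    (hs : s.card = k + 1) (G : Finset α → β) :
    ∑ t ∈ s.powersetCard k, G t = ∑ j ∈ s, G (s.erase j) := by
  refine (sum_bij (fun j _ => s.erase j) (fun j hj => ?_)
    (fun j hj j' hj' => s.erase_injOn hj hj') (fun t ht => ?_) (fun _ _ => rfl)).symm
  · exact mem_powersetCard.2 ⟨erase_subset j s, by rw [card_erase_of_mem hj, hs]; rfl⟩
  · obtain ⟨hts, htk⟩ := mem_powersetCard.1 ht
    obtain ⟨j, hj⟩ := card_eq_one.1 (show (s \ t).card = 1 by rw [card_sdiff_of_subset hts]; omega)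
    refine ⟨j, mem_sdiff.1 (hj ▸ mem_singleton_self j) |>.1, ?_⟩
    rw [← sdiff_singleton_eq_erase, ← hj, sdiff_sdiff_eq_self hts]

end Finset

theorem Fin.prod_pow_ite_last {M : Type*} [CommMonoid M] {k l : ℕ} (hl : l + 1 = k)
    (g : Fin k → M) :
    ∏ r, g r ^ (if (r : ℕ) = l then 2 else 1) = (∏ r, g r) * g ⟨l, hl ▸ l.lt_succ_self⟩ := by
  subst hl
  have hlt (r : Fin l) : (r.castSucc : ℕ) ≠ l := r.is_lt.ne
  simp only [Fin.prod_univ_castSucc, Fin.val_last, hlt, if_true, if_false, pow_one]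
  rw [mul_assoc, sq]
  rfl

theorem Fin.sup_image_univ_of_monotone {α : Type*} [SemilatticeSup α] [OrderBot α]
    [DecidableEq α] {k l : ℕ} (hl : l + 1 = k) {i : Fin k → α} (hi : Monotone i) :
    (univ.image i).sup id = i ⟨l, hl ▸ l.lt_succ_self⟩ := by
  subst hl
  rw [sup_image]
  exact le_antisymm (Finset.sup_le fun r _ => hi (Fin.le_last r))
    (le_sup (f := id ∘ i) (mem_univ _))

theorem Nat.sup_Icc_erase {a b j : ℕ} (hab : a < b) (hj : j ∈ Icc a b) :
    ((Icc a b).erase j).sup id = if j = b then b - 1 else b := by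
  obtain ⟨haj, hjb⟩ := mem_Icc.1 hj
  split_ifs with h <;>
  refine le_antisymm (Finset.sup_le fun x hx => ?_) (le_sup (f := id) ?_) <;>
    simp only [mem_erase, mem_Icc, id] at * <;> omega

theorem sum_strictMono_Icc_prod_sq_last {M : Type*} [CommSemiring M] {n : ℕ} (hn : 3 ≤ n)
    (u : ℕ → M) :
    ∑ i ∈ (Fintype.piFinset fun _ : Fin (n - 2) => Icc 1 (n - 1)).filter StrictMono,
        ∏ r, u (i r) ^ (if (r : ℕ) = n - 3 then 2 else 1) =
      ∑ j ∈ Icc 1 (n - 1), (∏ k ∈ (Icc 1 (n - 1)).erase j, u k) *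
        u (if j = n - 1 then n - 2 else n - 1) := calc
  _ = ∑ i ∈ (Fintype.piFinset fun _ : Fin (n - 2) => Icc 1 (n - 1)).filter StrictMono,
        (∏ k ∈ univ.image i, u k) * u ((univ.image i).sup id) :=
      sum_congr rfl fun i hi => by
        have hmono := (mem_filter.1 hi).2
        rw [Fin.prod_pow_ite_last (by omega), ← Fin.sup_image_univ_of_monotone (by omega)
          hmono.monotone, prod_image hmono.injective.injOn]
  _ = ∑ t ∈ (Icc 1 (n - 1)).powersetCard (n - 2), (∏ k ∈ t, u k) * u (t.sup id) :=
      sum_filter_strictMono_image_univ _ _ fun t => (∏ k ∈ t, u k) * u (t.sup id)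
  _ = ∑ j ∈ Icc 1 (n - 1), (∏ k ∈ (Icc 1 (n - 1)).erase j, u k) *
        u (((Icc 1 (n - 1)).erase j).sup id) :=
      sum_powersetCard_eq_sum_erase _ (by rw [Nat.card_Icc]; omega) _
  _ = _ := sum_congr rfl fun j hj => by rw [Nat.sup_Icc_erase (by omega) hj, Nat.sub_sub]

@[to_additive]
theorem Finset.prod_Icc_eq_prod_range_succ {M : Type*} [CommMonoid M] (f : ℕ → M) (m : ℕ) :
    ∏ k ∈ Icc 1 m, f k = ∏ k ∈ range m, f (k + 1) := by
  rw [range_eq_Ico, prod_Ico_add', zero_add, Ico_add_one_right_eq_Icc]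

namespace IsPrimitiveRoot

section CommRing

variable {R : Type*} [CommRing R] {ζ : R} {n : ℕ}

theorem one_sub_pow_ne_zero (hζ : IsPrimitiveRoot ζ n) {k : ℕ} (hk : k ∈ Icc 1 (n - 1)) :
    1 - ζ ^ k ≠ 0 := by
  rw [mem_Icc] at hk
  exact sub_ne_zero.2 (hζ.pow_ne_one_of_pos_of_lt (by omega) (by omega)).symm

theorem pow_sub_one_mul_self (hζ : IsPrimitiveRoot ζ n) (hn : 2 ≤ n) :
    ζ ^ (n - 1) * ζ ^ (n - 1) = ζ ^ (n - 2) := by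
  rw [← pow_add, show n - 1 + (n - 1) = n - 2 + n by omega, pow_add, hζ.pow_eq_one, mul_one]

theorem one_add_pow_sub_one_ne_zero (hζ : IsPrimitiveRoot ζ n) (hn : 3 ≤ n) :
    1 + ζ ^ (n - 1) ≠ 0 := fun h =>
  hζ.one_sub_pow_ne_zero (k := n - 2) (mem_Icc.2 ⟨by omega, by omega⟩) <| by
    rw [← hζ.pow_sub_one_mul_self (by omega)]
    linear_combination (1 - ζ ^ (n - 1)) * h

theorem prod_Icc_one_sub_pow [IsDomain R] (hζ : IsPrimitiveRoot ζ n) (hn : n ≠ 0) :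
    ∏ k ∈ Icc 1 (n - 1), (1 - ζ ^ k) = n := by
  obtain ⟨m, rfl⟩ := Nat.exists_eq_add_one_of_ne_zero hn
  rw [Nat.add_sub_cancel, prod_Icc_eq_prod_range_succ, hζ.prod_one_sub_pow_eq_order, Nat.cast_succ]

theorem sum_Icc_one_sub_pow [IsDomain R] (hζ : IsPrimitiveRoot ζ n) (hn : 1 < n) :
    ∑ k ∈ Icc 1 (n - 1), (1 - ζ ^ k) = n := by
  obtain ⟨m, rfl⟩ := Nat.exists_eq_add_one_of_ne_zero (by omega : n ≠ 0)
  have hgeom := hζ.geom_sum_eq_zero hn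
  rw [Nat.add_sub_cancel, sum_Icc_eq_sum_range_succ, sum_sub_distrib, sum_const, card_range,
    nsmul_one]
  rw [sum_range_succ', pow_zero] at hgeom
  rw [eq_neg_of_add_eq_zero_left hgeom]
  push_cast; ring

end CommRing

section Field

variable {K : Type*} [Field K] {ζ : K} {n : ℕ}

theorem prod_erase_one_div_one_sub_pow (hζ : IsPrimitiveRoot ζ n) {j : ℕ}
    (hj : j ∈ Icc 1 (n - 1)) :
    ∏ k ∈ (Icc 1 (n - 1)).erase j, 1 / (1 - ζ ^ k) = (1 - ζ ^ j) / n := by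
  have hprod := hζ.prod_Icc_one_sub_pow (by rw [mem_Icc] at hj; omega)
  rw [← mul_prod_erase _ _ hj] at hprod
  have herase : ∏ k ∈ (Icc 1 (n - 1)).erase j, (1 - ζ ^ k) ≠ 0 :=
    prod_ne_zero_iff.2 fun k hk => hζ.one_sub_pow_ne_zero (mem_of_mem_erase hk)
  rw [prod_div_distrib, prod_const_one, ← hprod]
  field_simp [hζ.one_sub_pow_ne_zero hj]

theorem sum_prod_erase_mul_ite (hζ : IsPrimitiveRoot ζ n) (hn : 3 ≤ n) {u : ℕ → K}
    (hu : ∀ k, u k = 1 / (1 - ζ ^ k)) :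
    ∑ j ∈ Icc 1 (n - 1), (∏ k ∈ (Icc 1 (n - 1)).erase j, u k) *
        u (if j = n - 1 then n - 2 else n - 1) =
      u (n - 1) + (1 / (1 + ζ ^ (n - 1)) - 1) / n := by
  have hn0 : (n : K) ≠ 0 := by
    rw [← hζ.prod_Icc_one_sub_pow (by omega)]
    exact prod_ne_zero_iff.2 fun k hk => hζ.one_sub_pow_ne_zero hk
  have hmem : n - 1 ∈ Icc 1 (n - 1) := mem_Icc.2 ⟨by omega, le_rfl⟩
  have hcoef : ∀ j ∈ Icc 1 (n - 1), ∏ k ∈ (Icc 1 (n - 1)).erase j, u k = (1 - ζ ^ j) / n :=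
    fun j hj => by simp_rw [hu]; exact hζ.prod_erase_one_div_one_sub_pow hj
  have hcoef_sum : ∑ j ∈ Icc 1 (n - 1), (1 - ζ ^ j) / n = 1 := by
    rw [← sum_div, hζ.sum_Icc_one_sub_pow (by omega), div_self hn0]
  calc _ = ∑ j ∈ Icc 1 (n - 1), ((1 - ζ ^ j) / n * u (n - 1) +
          if j = n - 1 then (1 - ζ ^ j) / n * (u (n - 2) - u (n - 1)) else 0) :=
        sum_congr rfl fun j hj => by rw [hcoef j hj]; split_ifs <;> ring
    _ = u (n - 1) + (1 - ζ ^ (n - 1)) / n * (u (n - 2) - u (n - 1)) := by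
        rw [sum_add_distrib, ← sum_mul, hcoef_sum, one_mul, sum_ite_eq', if_pos hmem]
    _ = _ := by
        have h1 := hζ.one_sub_pow_ne_zero hmem
        have h2 := hζ.one_add_pow_sub_one_ne_zero hn
        rw [hu (n - 2), hu (n - 1), ← hζ.pow_sub_one_mul_self (by omega)]
        generalize ζ ^ (n - 1) = w at h1 h2 ⊢
        rw [show 1 - w * w = (1 - w) * (1 + w) by ring]
        field_simp

end Field

end IsPrimitiveRoot

theorem Complex.re_one_div_one_sub_of_norm_eq_one {w : ℂ} (hw : ‖w‖ = 1) (h1 : w ≠ 1) :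
    (1 / (1 - w)).re = 1 / 2 := by
  have hsq : w.re * w.re + w.im * w.im = 1 := by
    rw [← normSq_apply, normSq_eq_norm_sq, hw, one_pow]
  have hre : w.re ≠ 1 := fun h => h1 (Complex.ext h (by simpa using (by nlinarith : w.im ^ 2 = 0)))
  have hden : 1 - w.re ≠ 0 := sub_ne_zero.2 hre.symm
  rw [one_div, inv_re, normSq_apply]
  simp only [sub_re, sub_im, one_re, one_im]
  field_simp
  nlinarith

theorem re_qmzv_depth_sub_two (n : ℕ) (hn : 3 ≤ n)
    (ζ : ℂ) (hζ : ζ = Complex.exp (2 * Real.pi * Complex.I / n))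
    (u : ℕ → ℂ) (hu : ∀ k, u k = 1 / (1 - ζ ^ k)) :
    (∑ i ∈ (Fintype.piFinset fun _ : Fin (n - 2) => Finset.Icc 1 (n - 1)).filter
          (fun i => StrictMono i),
        ∏ r, u (i r) ^ (if (r : ℕ) = n - 3 then 2 else 1)).re =
      ((n : ℝ) - 1) / (2 * n) := by
  have hprim : IsPrimitiveRoot ζ n := hζ ▸ isPrimitiveRoot_exp n (by omega)
  have hnorm : ‖ζ ^ (n - 1)‖ = 1 := by rw [norm_pow, hprim.norm'_eq_one (by omega), one_pow]
  have hre_sub : (1 / (1 - ζ ^ (n - 1))).re = 1 / 2 :=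
    re_one_div_one_sub_of_norm_eq_one hnorm (hprim.pow_ne_one_of_pos_of_lt (by omega) (by omega))
  have hre_add : (1 / (1 + ζ ^ (n - 1))).re = 1 / 2 := by
    rw [← sub_neg_eq_add]
    exact re_one_div_one_sub_of_norm_eq_one (by rwa [norm_neg])
      fun h => hprim.one_add_pow_sub_one_ne_zero hn (by linear_combination -h)
  rw [sum_strictMono_Icc_prod_sq_last hn, hprim.sum_prod_erase_mul_ite hn hu, hu, add_re,
    div_natCast_re, sub_re, hre_sub, hre_add, one_re]
  field_simp
  ring
end

section
/- Let m ≥ 1, n ≥ 1, and let ζ = exp(2πi/((m+1)n)). Define T_n(m) = Σ_{1≤i₁<i₂<…<i_m≤n} ∏_{r=1}^m 1/(1 - ζ^{(m+1)i_r - r}). Then T_n(m) = (1/(m+1))·C(n, m). -/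
/-!
Put `i₀ = 0`, `i_{m+1} = n + 1` and `e_k = (m + 1) i_k - k`. Lagrange interpolation of the
constant `1` at the inverses of the `m + 1` distinct points `y_k = ζ ^ e_k`, evaluated at `0`,
gives `∑_k ∏_{j ≠ k} (1 - y_j / y_k)⁻¹ = 1`. The term `k = 0` is the summand of `T_n(m)` at `i`.
The gaps `c_k = i_{k+1} - i_k` form a composition of `n + 1` into `m + 1` parts, the increments
`e_{k+1} - e_k = (m + 1) c_k - 1` add up to `(m + 1) n`, and so the term `k` is the summand at the
tuple whose gaps are those of `i` rotated by `k`. Rotations permute the compositions, hence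
summing over all compositions gives `(m + 1) T_n(m) = #compositions = C(n, m)`.
-/

open Complex Finset
open scoped Classical

open Polynomial in
theorem sum_prod_inv_one_sub_div_eq_one {K ι : Type*} [Field K] [DecidableEq ι] {s : Finset ι}
    (hs : s.Nonempty) {y : ι → K} (hy : Set.InjOn y s) (hy0 : ∀ i ∈ s, y i ≠ 0) :
    ∑ i ∈ s, ∏ j ∈ s.erase i, (1 - y j / y i)⁻¹ = 1 := by
  have hinv : Set.InjOn (fun i => (y i)⁻¹) s := fun i hi j hj h => hy hi hj (inv_injective h)
  have h := congrArg (eval 0) (Lagrange.sum_basis hinv hs)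
  simp only [eval_finsetSum, eval_one, Lagrange.basis, eval_prod, Lagrange.basisDivisor, eval_mul,
    eval_C, eval_sub, eval_X, zero_sub] at h
  refine (sum_congr rfl fun i hi => prod_congr rfl fun j hj => ?_).trans h
  have hij : y i - y j ≠ 0 :=
    sub_ne_zero.2 fun h => ne_of_mem_erase hj (hy (mem_of_mem_erase hj) hi h.symm)
  have hi0 := hy0 i hi
  have hj0 := hy0 j (mem_of_mem_erase hj)
  rw [inv_sub_inv hi0 hj0, one_sub_div hi0, inv_div, inv_div, ← neg_sub (y i) (y j), div_neg]
  field_simp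

theorem sum_prod_inv_one_sub_div_add_eq_one {G K : Type*} [AddGroup G] [Fintype G]
    [DecidableEq G] [Field K] {y : G → K} (hy : Function.Injective y) (hy0 : ∀ g, y g ≠ 0) :
    ∑ g, ∏ h ∈ univ.erase 0, (1 - y (g + h) / y g)⁻¹ = 1 := by
  refine (sum_congr rfl fun g _ => ?_).trans
    (sum_prod_inv_one_sub_div_eq_one univ_nonempty hy.injOn fun g _ => hy0 g)
  exact prod_equiv (Equiv.addLeft g) (by simp) fun _ _ => rfl

theorem ZMod.val_natCast_fin_add_one {m : ℕ} (r : Fin m) :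
    (((r : ℕ) + 1 : ℕ) : ZMod (m + 1)).val = r + 1 :=
  ZMod.val_cast_of_lt (by omega)

theorem ZMod.prod_erase_zero {M : Type*} [CommMonoid M] {m : ℕ} (f : ZMod (m + 1) → M) :
    ∏ j ∈ univ.erase 0, f j = ∏ r : Fin m, f ((r + 1 : ℕ) : ZMod (m + 1)) := by
  refine (prod_bij (s := univ) (t := univ.erase 0)
    (fun (r : Fin m) _ => ((r + 1 : ℕ) : ZMod (m + 1))) (fun r _ => ?_) (fun r _ s _ h => ?_)
    (fun j hj => ?_) fun _ _ => rfl).symm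
  · rw [mem_erase, ← ZMod.val_ne_zero, val_natCast_fin_add_one]
    exact ⟨by omega, mem_univ _⟩
  · have := congrArg ZMod.val h
    rw [val_natCast_fin_add_one, val_natCast_fin_add_one] at this
    exact Fin.ext (by omega)
  · have hj0 : j.val ≠ 0 := by simpa using hj
    refine ⟨⟨j.val - 1, by have := ZMod.val_lt j; omega⟩, mem_univ _, ZMod.val_injective _ ?_⟩
    rw [val_natCast_fin_add_one]
    dsimp only
    omega

theorem card_filter_strictMono_piFinset {α : Type*} [LinearOrder α] (s : Finset α) (m : ℕ) :
    #{i ∈ Fintype.piFinset fun _ : Fin m => s | StrictMono i} = (#s).choose m := by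
  rw [← card_powersetCard]
  refine card_bij (fun i _ => univ.image i) (fun i hi => ?_) (fun i hi j hj h => ?_) fun t ht => ?_
  · simp only [mem_filter, Fintype.mem_piFinset] at hi
    rw [mem_powersetCard, card_image_of_injective _ hi.2.injective, card_univ, Fintype.card_fin]
    exact ⟨image_subset_iff.2 fun r _ => hi.1 r, rfl⟩
  · simp only [mem_filter] at hi hj
    exact (hi.2.range_inj hj.2).1 (by simpa using congrArg ((↑) : Finset α → Set α) h)
  · rw [mem_powersetCard] at ht
    refine ⟨t.orderEmbOfFin ht.2, ?_, ?_⟩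
    · simp only [mem_filter, Fintype.mem_piFinset]
      exact ⟨fun r => ht.1 (t.orderEmbOfFin_mem ht.2 r), (t.orderEmbOfFin ht.2).strictMono⟩
    · apply coe_injective
      simp

def strictMonoTuples (m n : ℕ) : Finset (Fin m → ℕ) :=
  {i ∈ Fintype.piFinset fun _ => Icc 1 n | StrictMono i}

theorem mem_strictMonoTuples {m n : ℕ} {i : Fin m → ℕ} :
    i ∈ strictMonoTuples m n ↔ (∀ r, 1 ≤ i r ∧ i r ≤ n) ∧ StrictMono i := by
  simp only [strictMonoTuples, mem_filter, Fintype.mem_piFinset, mem_Icc]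

theorem card_strictMonoTuples (m n : ℕ) : #(strictMonoTuples m n) = n.choose m := by
  rw [strictMonoTuples, card_filter_strictMono_piFinset, Nat.card_Icc, Nat.add_sub_cancel]

def cyclicCompositions (m n : ℕ) : Finset (ZMod (m + 1) → ℕ) :=
  {c ∈ Fintype.piFinset fun _ => Icc 1 n | ∑ j, c j = n}

namespace CyclicComposition

variable {m n : ℕ}

def partialSum (c : ZMod (m + 1) → ℕ) (k : ℕ) : ℕ := ∑ j ∈ range k, c j

def rotate (c : ZMod (m + 1) → ℕ) (s : ZMod (m + 1)) : ZMod (m + 1) → ℕ := fun j => c (s + j)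

/-- For the gaps `c` of a tuple `i` this is `(m + 1) i_k - k`, with `i₀ = 0`. -/
def exponent (c : ZMod (m + 1) → ℕ) (k : ℕ) : ℤ := (m + 1) * partialSum c k - k

def toTuple (c : ZMod (m + 1) → ℕ) : Fin m → ℕ := fun r => partialSum c (r + 1)

/-- `pad n i k = i_k` in one-based indexing, with `i₀ = 0` and `i_{m+1} = n + 1`. -/
def pad (n : ℕ) (i : Fin m → ℕ) : ℕ → ℕ
  | 0 => 0
  | r + 1 => if h : r < m then i ⟨r, h⟩ else n + 1

def ofTuple (n : ℕ) (i : Fin m → ℕ) : ZMod (m + 1) → ℕ :=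
  fun j => pad n i (j.val + 1) - pad n i j.val

theorem mem_cyclicCompositions {c : ZMod (m + 1) → ℕ} :
    c ∈ cyclicCompositions m n ↔ (∀ j, 1 ≤ c j) ∧ ∑ j, c j = n := by
  simp only [cyclicCompositions, mem_filter, Fintype.mem_piFinset, mem_Icc]
  refine ⟨fun h => ⟨fun j => (h.1 j).1, h.2⟩, fun h => ⟨fun j => ⟨h.1 j, ?_⟩, h.2⟩⟩
  exact h.2 ▸ single_le_sum (fun _ _ => Nat.zero_le _) (mem_univ j)

theorem partialSum_succ (c : ZMod (m + 1) → ℕ) (k : ℕ) :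
    partialSum c (k + 1) = partialSum c k + c k :=
  sum_range_succ _ k

theorem partialSum_add (c : ZMod (m + 1) → ℕ) (s k : ℕ) :
    partialSum c (s + k) = partialSum c s + partialSum (rotate c s) k := by
  simp only [partialSum, rotate, sum_range_add, Nat.cast_add]

theorem partialSum_eq_sum_univ (c : ZMod (m + 1) → ℕ) : partialSum c (m + 1) = ∑ j, c j :=
  (Fin.sum_univ_eq_sum_range (fun j => c j) (m + 1)).symm.trans
    (sum_congr rfl fun j _ => congrArg c (ZMod.natCast_zmod_val (n := m + 1) j))

theorem strictMono_partialSum {c : ZMod (m + 1) → ℕ} (hc : ∀ j, 1 ≤ c j) :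
    StrictMono (partialSum c) :=
  strictMono_nat_of_lt_succ fun k => by
    rw [partialSum_succ]
    have := hc k
    omega

theorem pad_lt_pad_succ {i : Fin m → ℕ} (hi : i ∈ strictMonoTuples m n) {k : ℕ}
    (hk : k ≤ m) : pad n i k < pad n i (k + 1) := by
  obtain ⟨hbound, hmono⟩ := mem_strictMonoTuples.1 hi
  rcases k with _ | r
  · by_cases h : 0 < m
    · simpa [pad, h, Nat.lt_iff_add_one_le] using (hbound ⟨0, h⟩).1
    · simp [pad, h]
  · have hr : r < m := by omega
    by_cases h : r + 1 < m
    · have hlt : (⟨r, hr⟩ : Fin m) < ⟨r + 1, h⟩ := Fin.mk_lt_mk.2 (Nat.lt_succ_self r)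
      simpa [pad, h, hr] using hmono hlt
    · simp only [pad, h, hr, dite_true, dite_false]
      exact Nat.lt_succ_of_le (hbound _).2

theorem partialSum_ofTuple {i : Fin m → ℕ} (hi : i ∈ strictMonoTuples m n) {k : ℕ}
    (hk : k ≤ m + 1) : partialSum (ofTuple n i) k = pad n i k := by
  induction k with
  | zero => rfl
  | succ k ih =>
    have := pad_lt_pad_succ hi (k := k) (by omega)
    rw [partialSum_succ, ih (by omega), ofTuple, ZMod.val_cast_of_lt (by omega)]
    omega

theorem pad_toTuple {c : ZMod (m + 1) → ℕ} (hc : c ∈ cyclicCompositions m (n + 1)) {k : ℕ}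
    (hk : k ≤ m + 1) : pad n (toTuple c) k = partialSum c k := by
  rcases k with _ | r
  · rfl
  · by_cases h : r < m
    · simp [pad, toTuple, h]
    · rw [show r = m by omega, pad, dif_neg (lt_irrefl m), partialSum_eq_sum_univ,
        (mem_cyclicCompositions.1 hc).2]

theorem ofTuple_mem {i : Fin m → ℕ} (hi : i ∈ strictMonoTuples m n) :
    ofTuple n i ∈ cyclicCompositions m (n + 1) := by
  refine mem_cyclicCompositions.2 ⟨fun j => ?_, ?_⟩
  · have := pad_lt_pad_succ hi (k := j.val) (by have := ZMod.val_lt j; omega)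
    simp only [ofTuple]
    omega
  · rw [← partialSum_eq_sum_univ, partialSum_ofTuple hi le_rfl, pad, dif_neg (lt_irrefl m)]

theorem toTuple_mem {c : ZMod (m + 1) → ℕ} (hc : c ∈ cyclicCompositions m (n + 1)) :
    toTuple c ∈ strictMonoTuples m n := by
  have hmono := strictMono_partialSum (mem_cyclicCompositions.1 hc).1
  refine mem_strictMonoTuples.2 ⟨fun r => ⟨?_, ?_⟩, fun r s h => hmono (by simpa using h)⟩
  · exact (hmono.le_apply : (r : ℕ) + 1 ≤ _).trans' (by omega)
  · have := hmono (show (r : ℕ) + 1 < m + 1 by omega)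
    rw [partialSum_eq_sum_univ, (mem_cyclicCompositions.1 hc).2] at this
    exact Nat.lt_succ_iff.1 this

theorem toTuple_ofTuple {i : Fin m → ℕ} (hi : i ∈ strictMonoTuples m n) :
    toTuple (ofTuple n i) = i := by
  funext r
  rw [toTuple, partialSum_ofTuple hi (by omega), pad, dif_pos r.isLt]

theorem ofTuple_toTuple {c : ZMod (m + 1) → ℕ} (hc : c ∈ cyclicCompositions m (n + 1)) :
    ofTuple n (toTuple c) = c := by
  funext j
  have := ZMod.val_lt j
  rw [ofTuple, pad_toTuple hc (by omega), pad_toTuple hc (by omega), partialSum_succ,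
    ZMod.natCast_zmod_val, Nat.add_sub_cancel_left]

theorem sum_strictMonoTuples {M : Type*} [AddCommMonoid M] (f : (Fin m → ℕ) → M) :
    ∑ i ∈ strictMonoTuples m n, f i = ∑ c ∈ cyclicCompositions m (n + 1), f (toTuple c) :=
  sum_nbij' (ofTuple n) toTuple (fun _ => ofTuple_mem) (fun _ => toTuple_mem)
    (fun _ => toTuple_ofTuple) (fun _ => ofTuple_toTuple) fun _ hi => by rw [toTuple_ofTuple hi]

theorem card_cyclicCompositions : #(cyclicCompositions m (n + 1)) = n.choose m := by
  rw [← card_strictMonoTuples, card_eq_sum_ones, card_eq_sum_ones, sum_strictMonoTuples]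

theorem rotate_rotate (c : ZMod (m + 1) → ℕ) (s t : ZMod (m + 1)) :
    rotate (rotate c s) t = rotate c (s + t) := by
  funext j
  simp only [rotate, add_assoc]

@[simp]
theorem rotate_zero (c : ZMod (m + 1) → ℕ) : rotate c 0 = c := by
  funext j
  simp only [rotate, zero_add]

theorem rotate_mem {c : ZMod (m + 1) → ℕ} (hc : c ∈ cyclicCompositions m n) (s : ZMod (m + 1)) :
    rotate c s ∈ cyclicCompositions m n := by
  rw [mem_cyclicCompositions] at hc ⊢
  exact ⟨fun j => hc.1 _, (Equiv.sum_comp (Equiv.addLeft s) c).trans hc.2⟩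

theorem sum_rotate {M : Type*} [AddCommMonoid M] (f : (ZMod (m + 1) → ℕ) → M)
    (s : ZMod (m + 1)) :
    ∑ c ∈ cyclicCompositions m n, f (rotate c s) = ∑ c ∈ cyclicCompositions m n, f c := by
  refine sum_nbij' (rotate · s) (rotate · (-s)) (fun _ hc => rotate_mem hc s)
    (fun _ hc => rotate_mem hc (-s)) (fun c _ => ?_) (fun c _ => ?_) fun _ _ => rfl <;>
  simp [rotate_rotate]

theorem exponent_add (c : ZMod (m + 1) → ℕ) (s k : ℕ) :
    exponent c (s + k) = exponent c s + exponent (rotate c s) k := by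
  simp only [exponent, partialSum_add]
  push_cast
  ring

theorem exponent_add_period {c : ZMod (m + 1) → ℕ} (hc : c ∈ cyclicCompositions m (n + 1))
    (k : ℕ) : exponent c (k + (m + 1)) = exponent c k + (m + 1) * n := by
  rw [exponent_add, add_right_inj, exponent, partialSum_eq_sum_univ,
    (mem_cyclicCompositions.1 (rotate_mem hc _)).2]
  push_cast
  ring

theorem strictMono_exponent (hm : 1 ≤ m) {c : ZMod (m + 1) → ℕ} (hc : ∀ j, 1 ≤ c j) :
    StrictMono (exponent c) :=
  strictMono_nat_of_lt_succ fun k => by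
    simp only [exponent, partialSum_succ]
    have := hc k
    push_cast
    nlinarith

theorem pow_toTuple_eq_zpow_exponent {M : Type*} [GroupWithZero M] (ζ : M) {c : ZMod (m + 1) → ℕ}
    (hc : c ∈ cyclicCompositions m (n + 1)) (r : Fin m) :
    ζ ^ ((m + 1) * toTuple c r - ((r : ℕ) + 1)) = ζ ^ exponent c (r + 1) := by
  have := ((mem_strictMonoTuples.1 (toTuple_mem hc)).1 r).1
  have := r.isLt
  rw [exponent, ← toTuple, ← zpow_natCast, Nat.cast_sub (by nlinarith)]
  push_cast
  rfl

theorem periodic_zpow_exponent {K : Type*} [DivisionRing K] {ζ : K} (hζ0 : ζ ≠ 0)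
    (hζ : ζ ^ ((m + 1) * n) = 1) {c : ZMod (m + 1) → ℕ}
    (hc : c ∈ cyclicCompositions m (n + 1)) :
    Function.Periodic (fun k => ζ ^ exponent c k) (m + 1) := fun k => by
  simp only [exponent_add_period hc, zpow_add₀ hζ0]
  norm_cast
  rw [hζ, mul_one]

theorem zpow_exponent_ne {K : Type*} [Field K] {ζ : K} (hζ : IsPrimitiveRoot ζ ((m + 1) * n))
    (hζ0 : ζ ≠ 0) {c : ZMod (m + 1) → ℕ} (hc : c ∈ cyclicCompositions m (n + 1)) {k l : ℕ}
    (hkl : k < l) (hlk : l < k + (m + 1)) : ζ ^ exponent c k ≠ ζ ^ exponent c l := by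
  have hmono := strictMono_exponent (by omega) (mem_cyclicCompositions.1 hc).1
  have h1 := hmono hkl
  have h2 := hmono hlk
  rw [exponent_add_period hc] at h2
  intro h
  have hdvd : (((m + 1) * n : ℕ) : ℤ) ∣ exponent c l - exponent c k := by
    rw [← hζ.zpow_eq_one_iff_dvd, zpow_sub₀ hζ0, h, div_self (zpow_ne_zero _ hζ0)]
  have := Int.le_of_dvd (by omega) hdvd
  push_cast at this
  linarith

theorem sum_prod_rotate_eq_one {K : Type*} [Field K] {ζ : K} (hζ : IsPrimitiveRoot ζ ((m + 1) * n))
    (hn : n ≠ 0) {c : ZMod (m + 1) → ℕ} (hc : c ∈ cyclicCompositions m (n + 1)) :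
    ∑ s : ZMod (m + 1), ∏ r : Fin m, (1 - ζ ^ exponent (rotate c s) (r + 1))⁻¹ = 1 := by
  have hζ0 : ζ ≠ 0 := hζ.ne_zero (by positivity)
  set y : ZMod (m + 1) → K := fun j => ζ ^ exponent c j.val
  have hy_add (s j : ZMod (m + 1)) : y (s + j) = y s * ζ ^ exponent (rotate c s) j.val := by
    simp only [y]
    rw [ZMod.val_add, (periodic_zpow_exponent hζ0 hζ.pow_eq_one hc).map_mod_nat, exponent_add,
      ZMod.natCast_zmod_val, zpow_add₀ hζ0]
  have hy_inj : Function.Injective y := by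
    intro a b hab
    rcases lt_trichotomy a.val b.val with h | h | h
    · exact absurd hab (zpow_exponent_ne hζ hζ0 hc h (by have := ZMod.val_lt b; omega))
    · exact ZMod.val_injective _ h
    · exact absurd hab.symm (zpow_exponent_ne hζ hζ0 hc h (by have := ZMod.val_lt a; omega))
  refine (sum_congr rfl fun s _ => ?_).trans
    (sum_prod_inv_one_sub_div_add_eq_one hy_inj fun j => zpow_ne_zero _ hζ0)
  rw [ZMod.prod_erase_zero]
  refine prod_congr rfl fun r _ => ?_
  rw [hy_add, mul_div_cancel_left₀ _ (zpow_ne_zero _ hζ0), ZMod.val_natCast_fin_add_one]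

theorem succ_mul_sum_prod_exponent {K : Type*} [Field K] {ζ : K}
    (hζ : IsPrimitiveRoot ζ ((m + 1) * n)) (hn : n ≠ 0) :
    (m + 1) * ∑ c ∈ cyclicCompositions m (n + 1), ∏ r : Fin m, (1 - ζ ^ exponent c (r + 1))⁻¹ =
      #(cyclicCompositions m (n + 1)) := by
  set F := fun c : ZMod (m + 1) → ℕ => ∏ r : Fin m, (1 - ζ ^ exponent c (r + 1))⁻¹
  calc (m + 1) * ∑ c ∈ cyclicCompositions m (n + 1), F c
      = ∑ s : ZMod (m + 1), ∑ c ∈ cyclicCompositions m (n + 1), F (rotate c s) := by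
        simp only [sum_rotate, sum_const, card_univ, ZMod.card, nsmul_eq_mul]
        push_cast
        ring
    _ = ∑ c ∈ cyclicCompositions m (n + 1), ∑ s : ZMod (m + 1), F (rotate c s) := sum_comm
    _ = #(cyclicCompositions m (n + 1)) := by
        rw [sum_congr rfl fun c hc => sum_prod_rotate_eq_one hζ hn hc, sum_const, nsmul_one]

end CyclicComposition

open CyclicComposition in
theorem qmzv_shifted_indices_general (n m : ℕ) (hn : 1 ≤ n)
    (ζ : ℂ) (hζ : ζ = Complex.exp (2 * Real.pi * Complex.I / ((m + 1) * n))) :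
    ∑ i ∈ (Fintype.piFinset fun _ : Fin m => Finset.Icc 1 n).filter
        (fun i => StrictMono i),
      ∏ r : Fin m, (1 / (1 - ζ ^ ((m + 1) * i r - ((r : ℕ) + 1)))) =
      (1 / ((m : ℂ) + 1)) * (Nat.choose n m : ℂ) := by
  have hprim : IsPrimitiveRoot ζ ((m + 1) * n) := by
    rw [hζ]
    exact_mod_cast Complex.isPrimitiveRoot_exp ((m + 1) * n) (by positivity)
  have hsum := succ_mul_sum_prod_exponent hprim (by omega)
  rw [card_cyclicCompositions] at hsum
  calc _ = ∑ c ∈ cyclicCompositions m (n + 1), ∏ r : Fin m, (1 - ζ ^ exponent c (r + 1))⁻¹ :=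
        (sum_strictMonoTuples _).trans
          (sum_congr rfl fun c hc => by simp only [one_div, pow_toTuple_eq_zpow_exponent ζ hc])
    _ = _ := by
        rw [← hsum]
        field_simp

theorem qmzv_shifted_indices (n m : ℕ) (hn : 1 ≤ n) (hm : 1 ≤ m)
    (ζ : ℂ) (hζ : ζ = Complex.exp (2 * Real.pi * Complex.I / ((m + 1) * n))) :
    ∑ i ∈ (Fintype.piFinset fun _ : Fin m => Finset.Icc 1 n).filter
        (fun i => StrictMono i),
      ∏ r : Fin m, (1 / (1 - ζ ^ ((m + 1) * i r - ((r : ℕ) + 1)))) =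
      (1 / ((m : ℂ) + 1)) * (Nat.choose n m : ℂ) :=
  qmzv_shifted_indices_general n m hn ζ hζ
end
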